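/- arXiv:2511.20985 — 3 statements merged into one kernel-verified Lean document; each statement's English description precedes it below -/
import Mathlib

section
/- Let A be a Bernoulli random variable and D a real random variable defined on the event {A=1}. If on {A=1} we have D = S₁ + W where S₁ = E[D | A=1, X] is a measurable function of X and W is independent of X conditionally on A=1 with E[W | A=1]=0, then for any bounded measurable function of X, conditioning further on D given (A=1, S₁) provides no additional information: E[X | A=1, D, S₁] = E[X | A=1, S₁], i.e., the conditional expectation of X given (A=1, D, S₁) does not depend on D. -/
open MeasureTheory ProbabilityTheory


section Helpers

variable {Ω : Type*} [m0 : MeasurableSpace Ω]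

lemma helper_setIntegral_const (ν : Measure Ω) (t : Set Ω) (c : ℝ) :
    ∫ _ in t, c ∂ν = (ν t).toReal • c := setIntegral_const c

lemma helper_setIntegral_indicator (ν : Measure Ω) {s t : Set Ω} {f : Ω → ℝ}
    (ht : MeasurableSet t) :
    ∫ x in s, t.indicator f x ∂ν = ∫ x in s ∩ t, f x ∂ν := setIntegral_indicator ht

lemma helper_integral_indicator (ν : Measure Ω) {t : Set Ω} {f : Ω → ℝ}
    (ht : MeasurableSet t) :
    ∫ x, t.indicator f x ∂ν = ∫ x in t, f x ∂ν := integral_indicator ht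

lemma helper_add_compl (ν : Measure Ω) {t : Set Ω} {f : Ω → ℝ}
    (ht : MeasurableSet t) (hf : Integrable f ν) :
    (∫ x in t, f x ∂ν) + ∫ x in tᶜ, f x ∂ν = ∫ x, f x ∂ν := integral_add_compl ht hf

lemma helper_integral_iUnion (ν : Measure Ω) {t : ℕ → Set Ω} {f : Ω → ℝ}
    (htm : ∀ i, MeasurableSet (t i)) (hdisj : Pairwise (Function.onFun Disjoint t))
    (hf : IntegrableOn f (⋃ i, t i) ν) :
    ∫ x in ⋃ i, t i, f x ∂ν = ∑' i, ∫ x in t i, f x ∂ν :=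
  integral_iUnion htm hdisj hf

lemma helper_integrable_indicator (ν : Measure Ω) {t : Set Ω} {f : Ω → ℝ}
    (ht : MeasurableSet t) (hf : Integrable f ν) : Integrable (t.indicator f) ν :=
  hf.indicator ht

lemma helper_integrableOn (ν : Measure Ω) {s : Set Ω} {f : Ω → ℝ}
    (hf : Integrable f ν) : IntegrableOn f s ν := hf.integrableOn

end Helpers

/-- Auxiliary lemma: if `mX` is independent of `mW`, `f` is an integrable `mX`-measurable
function, `G ≤ mX`, and `mP'` is generated by a π-system of sets of the form `t₁ ∩ t₂` with
`t₁ ∈ mW` and `t₂ ∈ G`, then `E[f | mP'] = E[f | G]` a.e. -/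
theorem indep_condexp_aux {Ω : Type*} {m0 : MeasurableSpace Ω} {ν : Measure Ω}
    [IsProbabilityMeasure ν] {mX mW G mP' : MeasurableSpace Ω}
    (hmXle : mX ≤ m0) (hmWle : mW ≤ m0) (hGX : G ≤ mX) (hGP' : G ≤ mP')
    (hmP'le : mP' ≤ m0)
    (hindep : Indep mX mW ν)
    {f : Ω → ℝ} (hfint : Integrable f ν) (hfX : StronglyMeasurable[mX] f)
    {π : Set (Set Ω)} (hgen : mP' = MeasurableSpace.generateFrom π) (hpi : IsPiSystem π)
    (hbasic : ∀ t ∈ π, ∃ t₁ t₂, MeasurableSet[mW] t₁ ∧ MeasurableSet[G] t₂ ∧ t = t₁ ∩ t₂) :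
    ν[f|mP'] =ᵐ[ν] ν[f|G] := by
  have hGle : G ≤ m0 := hGX.trans hmXle
  haveI : SigmaFinite (ν.trim hGle) := by infer_instance
  haveI : SigmaFinite (ν.trim hmWle) := by infer_instance
  haveI : SigmaFinite (ν.trim hmP'le) := by infer_instance
  -- key integral identity from independence
  have key : ∀ (φ : Ω → ℝ), Integrable φ ν → StronglyMeasurable[mX] φ →
      ∀ t : Set Ω, MeasurableSet[mW] t →
        ∫ x in t, φ x ∂ν = (ν t).toReal • ∫ x, φ x ∂ν := by
    intro φ hφint hφmeas t ht
    have h1 : ∫ x in t, φ x ∂ν = ∫ x in t, (ν[φ|mW]) x ∂ν :=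
      (setIntegral_condExp hmWle hφint ht).symm
    have h2 : ν[φ|mW] =ᵐ[ν] fun _ => ∫ x, φ x ∂ν :=
      condExp_indep_eq hmXle hmWle hφmeas hindep
    rw [h1, integral_congr_ae (ae_restrict_of_ae h2), helper_setIntegral_const (m0 := m0)]
  set g : Ω → ℝ := ν[f|G] with hg
  have hgG : StronglyMeasurable[G] g := stronglyMeasurable_condExp
  have hgint : Integrable g ν := integrable_condExp
  have hg_eq : ∀ t : Set Ω, MeasurableSet[mP'] t →
      ∫ x in t, g x ∂ν = ∫ x in t, f x ∂ν := by
    intro t ht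
    refine MeasurableSpace.induction_on_inter
      (C := fun t _ => ∫ x in t, g x ∂ν = ∫ x in t, f x ∂ν) hgen hpi ?_ ?_ ?_ ?_ _ ht
    · simp
    · intro t htπ
      obtain ⟨t₁, t₂, ht₁, ht₂, rfl⟩ := hbasic t htπ
      have ht₂0 : MeasurableSet[m0] t₂ := hGle _ ht₂
      have hindf : ∫ x in t₁ ∩ t₂, f x ∂ν = (ν t₁).toReal • ∫ x in t₂, f x ∂ν := by
        rw [← helper_setIntegral_indicator (m0 := m0) ν ht₂0,
          key _ (helper_integrable_indicator (m0 := m0) ν ht₂0 hfint) (hfX.indicator (hGX _ ht₂)) t₁ ht₁,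
          helper_integral_indicator (m0 := m0) ν ht₂0]
      have hindg : ∫ x in t₁ ∩ t₂, g x ∂ν = (ν t₁).toReal • ∫ x in t₂, g x ∂ν := by
        rw [← helper_setIntegral_indicator (m0 := m0) ν ht₂0,
          key _ (helper_integrable_indicator (m0 := m0) ν ht₂0 hgint) ((hgG.mono hGX).indicator (hGX _ ht₂)) t₁ ht₁,
          helper_integral_indicator (m0 := m0) ν ht₂0]
      have hfg : ∫ x in t₂, g x ∂ν = ∫ x in t₂, f x ∂ν :=
        setIntegral_condExp hGle hfint ht₂
      rw [hindf, hindg, hfg]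
    · intro t htm ih
      have htm0 : MeasurableSet[m0] t := hmP'le _ htm
      have h1 := helper_add_compl (m0 := m0) ν htm0 hgint
      have h2 := helper_add_compl (m0 := m0) ν htm0 hfint
      have h3 : ∫ x in tᶜ, g x ∂ν = ∫ x, g x ∂ν - ∫ x in t, g x ∂ν := by linarith
      have h4 : ∫ x in tᶜ, f x ∂ν = ∫ x, f x ∂ν - ∫ x in t, f x ∂ν := by linarith
      have h5 : ∫ x, g x ∂ν = ∫ x, f x ∂ν := by
        have := setIntegral_condExp hGle hfint (MeasurableSet.univ (α := Ω) (m := G))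
        simpa using this
      rw [h3, h4, ih, h5]
    · intro t hdisj htm ih
      rw [helper_integral_iUnion (m0 := m0) ν (fun i => hmP'le _ (htm i)) hdisj (helper_integrableOn (m0 := m0) ν hgint),
        helper_integral_iUnion (m0 := m0) ν (fun i => hmP'le _ (htm i)) hdisj (helper_integrableOn (m0 := m0) ν hfint)]
      exact tsum_congr ih
  have hgver : g =ᵐ[ν] ν[f|mP'] := by
    refine ae_eq_condExp_of_forall_setIntegral_eq hmP'le hfint
      (fun t _ _ => helper_integrableOn (m0 := m0) ν hgint) (fun t ht _ => hg_eq t ht) ?_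
    exact (hgG.mono hGP').aestronglyMeasurable
  exact hgver.symm

/-- If, on the event `{A = 1}`, the dose `D` decomposes as `D = S₁(X) + W` with
`S₁(X)` a version of `E[D | A=1, X]` and the residual `W` independent of `X` (conditionally on
`A = 1`) with conditional mean zero, then for any bounded measurable function `h` of `X`,
`E[h(X) | A=1, D, S₁(X)] = E[h(X) | A=1, S₁(X)]` : conditioning further on `D` provides no
additional information about `X`. -/
theorem stmt0
    {Ω V : Type*} [MeasurableSpace Ω] [MeasurableSpace V]
    (μ : Measure Ω) [IsProbabilityMeasure μ]
    (A D : Ω → ℝ) (X : Ω → V)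
    (hA : Measurable A) (hD : Measurable D) (hX : Measurable X)
    (hBern : ∀ ω, A ω = 0 ∨ A ω = 1)
    (s : Set Ω) (hs : s = {ω | A ω = 1}) (hμs : μ s ≠ 0)
    (S₁ : V → ℝ) (hS₁ : Measurable S₁)
    -- S₁(X) is a version of E[D | A = 1, X]
    (hS₁ver : (μ[|s])[D | MeasurableSpace.comap X inferInstance]
        =ᵐ[μ[|s]] fun ω => S₁ (X ω))
    -- W = D - S₁(X) is independent of X conditionally on A = 1
    (hWindep : IndepFun (fun ω => D ω - S₁ (X ω)) X (μ[|s]))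
    -- E[W | A = 1] = 0
    (hWmean : ∫ ω, (D ω - S₁ (X ω)) ∂(μ[|s]) = 0)
    (h : V → ℝ) (hh : Measurable h) (hhbd : ∃ C, ∀ v, |h v| ≤ C) :
    (μ[|s])[fun ω => h (X ω) |
        MeasurableSpace.comap (fun ω => (D ω, S₁ (X ω))) inferInstance]
      =ᵐ[μ[|s]]
    (μ[|s])[fun ω => h (X ω) |
        MeasurableSpace.comap (fun ω => S₁ (X ω)) inferInstance] := by
  classical
  haveI : IsProbabilityMeasure (μ[|s]) := cond_isProbabilityMeasure hμs
  have hS₁X : Measurable fun ω => S₁ (X ω) := hS₁.comp hX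
  have hWmeas : Measurable fun ω => D ω - S₁ (X ω) := hD.sub hS₁X
  -- comap of the (D, S₁X) pair equals comap of the (W, S₁X) pair
  have hPP' : MeasurableSpace.comap (fun ω => (D ω, S₁ (X ω))) inferInstance
      = MeasurableSpace.comap (fun ω => (D ω - S₁ (X ω), S₁ (X ω))) inferInstance := by
    have h1 : (fun ω => (D ω, S₁ (X ω)))
        = (fun p : ℝ × ℝ => (p.1 + p.2, p.2)) ∘ (fun ω => (D ω - S₁ (X ω), S₁ (X ω))) := by
      funext ω; simp
    have h2 : (fun ω => (D ω - S₁ (X ω), S₁ (X ω)))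
        = (fun p : ℝ × ℝ => (p.1 - p.2, p.2)) ∘ (fun ω => (D ω, S₁ (X ω))) := by
      funext ω; simp
    have hψ : Measurable fun p : ℝ × ℝ => (p.1 + p.2, p.2) :=
      (measurable_fst.add measurable_snd).prodMk measurable_snd
    have hφ : Measurable fun p : ℝ × ℝ => (p.1 - p.2, p.2) :=
      (measurable_fst.sub measurable_snd).prodMk measurable_snd
    refine le_antisymm ?_ ?_
    · rw [h1, ← MeasurableSpace.comap_comp]
      exact MeasurableSpace.comap_mono hψ.comap_le
    · rw [h2, ← MeasurableSpace.comap_comp]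
      exact MeasurableSpace.comap_mono hφ.comap_le
  rw [hPP']
  have hGX : MeasurableSpace.comap (fun ω => S₁ (X ω)) inferInstance
      ≤ MeasurableSpace.comap X inferInstance := by
    have : (fun ω => S₁ (X ω)) = S₁ ∘ X := rfl
    rw [this, ← MeasurableSpace.comap_comp]
    exact MeasurableSpace.comap_mono hS₁.comap_le
  have hGP' : MeasurableSpace.comap (fun ω => S₁ (X ω)) inferInstance
      ≤ MeasurableSpace.comap (fun ω => (D ω - S₁ (X ω), S₁ (X ω))) inferInstance := by
    have : (fun ω => S₁ (X ω)) = (fun p : ℝ × ℝ => p.2)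
        ∘ (fun ω => (D ω - S₁ (X ω), S₁ (X ω))) := rfl
    rw [this, ← MeasurableSpace.comap_comp]
    exact MeasurableSpace.comap_mono measurable_snd.comap_le
  have hindep : Indep (MeasurableSpace.comap X inferInstance)
      (MeasurableSpace.comap (fun ω => D ω - S₁ (X ω)) inferInstance) (μ[|s]) := by
    rw [IndepFun_iff_Indep] at hWindep
    exact hWindep.symm
  obtain ⟨C, hC⟩ := hhbd
  have hfmeas : Measurable fun ω => h (X ω) := hh.comp hX
  have hfint : Integrable (fun ω => h (X ω)) (μ[|s]) := by
    refine ⟨hfmeas.aestronglyMeasurable, ?_⟩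
    exact HasFiniteIntegral.of_bounded (C := C) (ae_of_all _ fun ω => by
      simpa [Real.norm_eq_abs] using hC (X ω))
  have hfX : StronglyMeasurable[MeasurableSpace.comap X inferInstance]
      (fun ω => h (X ω)) := by
    have : Measurable[MeasurableSpace.comap X inferInstance] fun ω => h (X ω) := by
      intro t ht
      exact ⟨h ⁻¹' t, hh ht, rfl⟩
    exact this.stronglyMeasurable
  refine indep_condexp_aux hX.comap_le hWmeas.comap_le hGX hGP'
    (hWmeas.prodMk hS₁X).comap_le hindep hfint hfX
    (π := Set.preimage (fun ω => (D ω - S₁ (X ω), S₁ (X ω))) ''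
      Set.image2 (· ×ˢ ·) { s : Set ℝ | MeasurableSet s } { t : Set ℝ | MeasurableSet t })
    ?_ (isPiSystem_prod.comap _) ?_
  · rw [← generateFrom_prod, MeasurableSpace.comap_generateFrom]
  · rintro t ⟨r, ⟨B₁, hB₁, B₂, hB₂, rfl⟩, rfl⟩
    refine ⟨(fun ω => D ω - S₁ (X ω)) ⁻¹' B₁, (fun ω => S₁ (X ω)) ⁻¹' B₂,
      ⟨B₁, hB₁, rfl⟩, ⟨B₂, hB₂, rfl⟩, ?_⟩
    ext ω; simp [Set.mem_prod]
end

section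
/- Let A be a binary random variable with P(A=1|X) = S₂(X) for a measurable function S₂ of X taking values in (0,1). Then conditionally on S₂(X), the covariate X and the unexposed indicator are mean-independent in the sense that E[X · 1{A=0} | S₂(X)] = (1 − S₂(X)) · E[X | S₂(X)], and consequently E[X | A=0, S₂(X)] = E[X | S₂(X)]. -/
open MeasureTheory ProbabilityTheory

/-- If `P(A = 1 | X) = S₂(X)` with `S₂(X) ∈ (0,1)`, then conditionally on `S₂(X)`
the covariate `X` and the unexposed indicator `1{A=0} = 1 - A` are mean independent:
`E[X·1{A=0} | S₂(X)] = (1 - S₂(X))·E[X | S₂(X)]`, and consequently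
`E[X | A=0, S₂(X)] = E[X | S₂(X)]` (coordinatewise, for an integrable random vector `X`). -/
theorem stmt1
    {Ω : Type*} [MeasurableSpace Ω] (μ : Measure Ω) [IsProbabilityMeasure μ]
    {k : ℕ} (A : Ω → ℝ) (X : Ω → Fin k → ℝ)
    (hA : Measurable A) (hX : Measurable X)
    (hBern : ∀ ω, A ω = 0 ∨ A ω = 1)
    (hXint : ∀ j, Integrable (fun ω => X ω j) μ)
    (S₂ : (Fin k → ℝ) → ℝ) (hS₂ : Measurable S₂)
    (hS₂01 : ∀ v, 0 < S₂ v ∧ S₂ v < 1)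
    -- S₂(X) is the propensity score : a version of P(A = 1 | X)
    (hps : μ[A | MeasurableSpace.comap X inferInstance] =ᵐ[μ] fun ω => S₂ (X ω))
    (hμ0 : μ {ω | A ω = 0} ≠ 0) :
    (∀ j, μ[fun ω => X ω j * (1 - A ω) |
          MeasurableSpace.comap (fun ω => S₂ (X ω)) inferInstance]
        =ᵐ[μ] fun ω => (1 - S₂ (X ω)) *
          ((μ[fun ω' => X ω' j |
            MeasurableSpace.comap (fun ω' => S₂ (X ω')) inferInstance]) ω))
    ∧ (∀ j, (μ[|{ω | A ω = 0}])[fun ω => X ω j |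
          MeasurableSpace.comap (fun ω => S₂ (X ω)) inferInstance]
        =ᵐ[μ[|{ω | A ω = 0}]]
        μ[fun ω => X ω j |
          MeasurableSpace.comap (fun ω => S₂ (X ω)) inferInstance]) := by
  rename_i mΩ hPμ
  set E : Set Ω := {ω | A ω = 0} with hEdef
  have hE : MeasurableSet E := hA (measurableSet_singleton 0)
  set m₀ : MeasurableSpace Ω := MeasurableSpace.comap X inferInstance with hm₀def
  set m : MeasurableSpace Ω := MeasurableSpace.comap (fun ω => S₂ (X ω)) inferInstance
    with hmdef
  letI : MeasurableSpace Ω := mΩ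
  have hm₀ : m₀ ≤ _ := hX.comap_le
  have hm : m ≤ _ := (hS₂.comp hX).comap_le
  have hmm₀ : m ≤ m₀ := by
    intro s hs
    obtain ⟨t, ht, rfl⟩ := hs
    exact ⟨S₂ ⁻¹' t, hS₂ ht, rfl⟩
  -- measurability facts
  have hSmeas : Measurable[m] (fun ω => S₂ (X ω)) := Measurable.of_comap_le le_rfl
  have hSm : StronglyMeasurable[m] (fun ω => S₂ (X ω)) := hSmeas.stronglyMeasurable
  have h1Sm : StronglyMeasurable[m] (fun ω => 1 - S₂ (X ω)) :=
    (stronglyMeasurable_const.sub hSm)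
  have hXmm₀ : Measurable[m₀] X := Measurable.of_comap_le le_rfl
  have hXjm₀ : ∀ j, StronglyMeasurable[m₀] (fun ω => X ω j) := by
    intro j
    have h : Measurable[m₀] (fun ω => X ω j) := (measurable_pi_apply j).comp hXmm₀
    exact h.stronglyMeasurable
  -- boundedness facts
  have hAbd : ∀ ω, ‖1 - A ω‖ ≤ 1 := by
    intro ω; rcases hBern ω with h | h <;> simp [h]
  have hSbd : ∀ ω, ‖1 - S₂ (X ω)‖ ≤ 1 := by
    intro ω
    rcases hS₂01 (X ω) with ⟨h0, h1⟩
    rw [Real.norm_eq_abs, abs_le]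
    constructor <;> linarith
  -- integrability facts
  have hAint : Integrable A μ := by
    refine (integrable_const (1 : ℝ)).mono' hA.aestronglyMeasurable ?_
    refine Filter.Eventually.of_forall fun ω => ?_
    rcases hBern ω with h | h <;> simp [h]
  have h1Aint : Integrable (fun ω => 1 - A ω) μ := (integrable_const (1 : ℝ)).sub hAint
  have hXjAint : ∀ j, Integrable (fun ω => X ω j * (1 - A ω)) μ := by
    intro j
    refine (hXint j).norm.mono'
      (((hXint j).aestronglyMeasurable.mul
        (aestronglyMeasurable_const.sub hA.aestronglyMeasurable))) ?_
    refine Filter.Eventually.of_forall fun ω => ?_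
    have := hAbd ω
    rw [norm_mul]
    calc ‖X ω j‖ * ‖1 - A ω‖ ≤ ‖X ω j‖ * 1 := by
          exact mul_le_mul_of_nonneg_left this (norm_nonneg _)
      _ = ‖X ω j‖ := mul_one _
  have hXjSint : ∀ j, Integrable (fun ω => (1 - S₂ (X ω)) * X ω j) μ := by
    intro j
    refine (hXint j).norm.mono'
      ((aestronglyMeasurable_const.sub ((hS₂.comp hX).aestronglyMeasurable)).mul
        (hXint j).aestronglyMeasurable) ?_
    refine Filter.Eventually.of_forall fun ω => ?_
    rw [norm_mul]
    calc ‖1 - S₂ (X ω)‖ * ‖X ω j‖ ≤ 1 * ‖X ω j‖ :=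
          mul_le_mul_of_nonneg_right (hSbd ω) (norm_nonneg _)
      _ = ‖X ω j‖ := one_mul _
  have h1Sint : Integrable (fun ω => 1 - S₂ (X ω)) μ :=
    (integrable_const (1 : ℝ)).mono'
      (aestronglyMeasurable_const.sub (hS₂.comp hX).aestronglyMeasurable)
      (Filter.Eventually.of_forall hSbd)
  -- Step B : conditional expectation given m₀
  have hB : ∀ j, μ[(fun ω => X ω j * (1 - A ω))|m₀]
      =ᵐ[μ] fun ω => (1 - S₂ (X ω)) * X ω j := by
    intro j
    have hpull : μ[(fun ω => X ω j) * (fun ω => 1 - A ω)|m₀]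
        =ᵐ[μ] (fun ω => X ω j) * μ[(fun ω => 1 - A ω)|m₀] :=
      condExp_mul_of_stronglyMeasurable_left (hXjm₀ j) (hXjAint j) h1Aint
    have h1A : μ[(fun ω => 1 - A ω)|m₀] =ᵐ[μ] fun ω => 1 - S₂ (X ω) := by
      have hsub : μ[(fun ω => (1:ℝ) - A ω)|m₀] =ᵐ[μ] μ[(fun _ => (1:ℝ))|m₀] - μ[A|m₀] :=
        condExp_sub (integrable_const 1) hAint m₀
      have hc : μ[(fun _ => (1:ℝ))|m₀] = fun _ => (1:ℝ) := condExp_const hm₀ 1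
      filter_upwards [hsub, hps] with ω h₁ h₂
      simp only [h₁, Pi.sub_apply, hc, h₂]
    filter_upwards [hpull, h1A] with ω h₁ h₂
    simp only [Pi.mul_apply] at h₁
    have hre : (μ[fun ω => X ω j * (1 - A ω)|m₀]) ω
        = (μ[(fun ω => X ω j) * fun ω => 1 - A ω|m₀]) ω := rfl
    rw [hre, h₁, h₂]; ring
  -- the conditional expectation of 1 - A given m
  have h1Am : μ[(fun ω => 1 - A ω)|m] =ᵐ[μ] fun ω => 1 - S₂ (X ω) := by
    have htower : μ[(fun ω => 1 - A ω)|m] =ᵐ[μ] μ[μ[(fun ω => 1 - A ω)|m₀]|m] :=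
      (condExp_condExp_of_le hmm₀ hm₀).symm
    have h1A : μ[(fun ω => 1 - A ω)|m₀] =ᵐ[μ] fun ω => 1 - S₂ (X ω) := by
      have hsub : μ[(fun ω => (1:ℝ) - A ω)|m₀] =ᵐ[μ] μ[(fun _ => (1:ℝ))|m₀] - μ[A|m₀] :=
        condExp_sub (integrable_const 1) hAint m₀
      have hc : μ[(fun _ => (1:ℝ))|m₀] = fun _ => (1:ℝ) := condExp_const hm₀ 1
      filter_upwards [hsub, hps] with ω h₁ h₂
      simp only [h₁, Pi.sub_apply, hc, h₂]
    calc μ[(fun ω => 1 - A ω)|m] =ᵐ[μ] μ[μ[(fun ω => 1 - A ω)|m₀]|m] := htower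
      _ =ᵐ[μ] μ[(fun ω => 1 - S₂ (X ω))|m] := condExp_congr_ae h1A
      _ =ᵐ[μ] fun ω => 1 - S₂ (X ω) := by
          rw [condExp_of_stronglyMeasurable hm h1Sm h1Sint]
  -- Part 1
  have h1 : ∀ j, μ[(fun ω => X ω j * (1 - A ω))|m]
      =ᵐ[μ] fun ω => (1 - S₂ (X ω)) * (μ[(fun ω' => X ω' j)|m]) ω := by
    intro j
    have htower : μ[(fun ω => X ω j * (1 - A ω))|m]
        =ᵐ[μ] μ[μ[(fun ω => X ω j * (1 - A ω))|m₀]|m] :=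
      (condExp_condExp_of_le hmm₀ hm₀).symm
    have hpull : μ[(fun ω => 1 - S₂ (X ω)) * (fun ω => X ω j)|m]
        =ᵐ[μ] (fun ω => 1 - S₂ (X ω)) * μ[(fun ω => X ω j)|m] :=
      condExp_mul_of_stronglyMeasurable_left h1Sm (hXjSint j) (hXint j)
    calc μ[(fun ω => X ω j * (1 - A ω))|m]
        =ᵐ[μ] μ[μ[(fun ω => X ω j * (1 - A ω))|m₀]|m] := htower
      _ =ᵐ[μ] μ[(fun ω => (1 - S₂ (X ω)) * X ω j)|m] := condExp_congr_ae (hB j)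
      _ =ᵐ[μ] fun ω => (1 - S₂ (X ω)) * (μ[(fun ω' => X ω' j)|m]) ω := hpull
  refine ⟨h1, ?_⟩
  -- Part 2
  intro j
  haveI hνP : IsProbabilityMeasure (μ[|E]) := cond_isProbabilityMeasure hμ0
  have hinvtop : (μ E)⁻¹ ≠ ⊤ := ENNReal.inv_ne_top.mpr hμ0
  have hXν : Integrable (fun ω => X ω j) (μ[|E]) := by
    unfold ProbabilityTheory.cond; exact ((hXint j).restrict).smul_measure hinvtop
  have hgint : Integrable (μ[(fun ω => X ω j)|m]) μ := integrable_condExp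
  have hgν : Integrable (μ[(fun ω => X ω j)|m]) (μ[|E]) := by
    unfold ProbabilityTheory.cond; exact (hgint.restrict).smul_measure hinvtop
  have hgAint : Integrable (fun ω => (μ[(fun ω' => X ω' j)|m]) ω * (1 - A ω)) μ := by
    refine hgint.norm.mono'
      ((hgint.aestronglyMeasurable.mul
        (aestronglyMeasurable_const.sub hA.aestronglyMeasurable))) ?_
    refine Filter.Eventually.of_forall fun ω => ?_
    rw [norm_mul]
    calc ‖(μ[(fun ω' => X ω' j)|m]) ω‖ * ‖1 - A ω‖
        ≤ ‖(μ[(fun ω' => X ω' j)|m]) ω‖ * 1 :=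
          mul_le_mul_of_nonneg_left (hAbd ω) (norm_nonneg _)
      _ = ‖(μ[(fun ω' => X ω' j)|m]) ω‖ := mul_one _
  -- indicator identity
  have hind : ∀ h : Ω → ℝ, ∀ ω, E.indicator h ω = h ω * (1 - A ω) := by
    intro h ω
    rcases hBern ω with hω | hω
    · have : ω ∈ E := hω
      simp [Set.indicator_of_mem this, hω]
    · have : ω ∉ E := by simp [hEdef, hω]
      simp [Set.indicator_of_notMem this, hω]
  have key : ∀ s : Set Ω, MeasurableSet[m] s →
      ∫ x in s ∩ E, (μ[(fun ω => X ω j)|m]) x ∂μ = ∫ x in s ∩ E, X x j ∂μ := by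
    intro s hs
    have e1 : ∫ x in s ∩ E, X x j ∂μ = ∫ x in s, X x j * (1 - A x) ∂μ := by
      rw [← setIntegral_indicator (μ := μ) hE]
      exact integral_congr_ae (Filter.Eventually.of_forall fun ω => hind _ ω)
    have e2 : ∫ x in s ∩ E, (μ[(fun ω => X ω j)|m]) x ∂μ
        = ∫ x in s, (μ[(fun ω => X ω j)|m]) x * (1 - A x) ∂μ := by
      rw [← setIntegral_indicator (μ := μ) hE]
      exact integral_congr_ae (Filter.Eventually.of_forall fun ω => hind _ ω)
    rw [e1, e2]
    -- both sides equal ∫_s (1 - S₂ (X x)) * (μ[X_j|m]) x dμ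
    have hL : ∫ x in s, (μ[(fun ω => X ω j)|m]) x * (1 - A x) ∂μ
        = ∫ x in s, (1 - S₂ (X x)) * (μ[(fun ω => X ω j)|m]) x ∂μ := by
      have hpull : μ[(μ[(fun ω => X ω j)|m]) * (fun ω => 1 - A ω)|m]
          =ᵐ[μ] (μ[(fun ω => X ω j)|m]) * μ[(fun ω => 1 - A ω)|m] :=
        condExp_mul_of_stronglyMeasurable_left stronglyMeasurable_condExp hgAint h1Aint
      calc ∫ x in s, (μ[(fun ω => X ω j)|m]) x * (1 - A x) ∂μ
          = ∫ x in s, (μ[(μ[(fun ω => X ω j)|m]) * (fun ω => 1 - A ω)|m]) x ∂μ :=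
            (setIntegral_condExp hm hgAint hs).symm
        _ = ∫ x in s, (1 - S₂ (X x)) * (μ[(fun ω => X ω j)|m]) x ∂μ := by
            refine integral_congr_ae (ae_restrict_of_ae ?_)
            filter_upwards [hpull, h1Am] with ω hp hs2
            rw [hp]
            simp only [Pi.mul_apply]
            rw [hs2]; ring
    have hR : ∫ x in s, X x j * (1 - A x) ∂μ
        = ∫ x in s, (1 - S₂ (X x)) * (μ[(fun ω => X ω j)|m]) x ∂μ := by
      calc ∫ x in s, X x j * (1 - A x) ∂μ
          = ∫ x in s, (μ[(fun ω => X ω j * (1 - A ω))|m]) x ∂μ :=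
            (setIntegral_condExp hm (hXjAint j) hs).symm
        _ = ∫ x in s, (1 - S₂ (X x)) * (μ[(fun ω => X ω j)|m]) x ∂μ :=
            integral_congr_ae (ae_restrict_of_ae (h1 j))
    rw [hL, hR]
  -- apply uniqueness of conditional expectation under the conditional measure
  refine (ae_eq_condExp_of_forall_setIntegral_eq hm hXν
    (fun s _ _ => hgν.integrableOn) ?_
    ((stronglyMeasurable_condExp (m := m) (μ := μ) (f := fun ω => X ω j)).aestronglyMeasurable)).symm
  intro s hs _
  unfold ProbabilityTheory.cond
  rw [Measure.restrict_smul, integral_smul_measure, integral_smul_measure]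
  rw [Measure.restrict_restrict (hm s hs), key s hs]
end

section
/- Suppose (Y, D, X) satisfy, conditionally on A=1, the linear model E[Y | D, X, A=1] = θ₀* + θ₁₂ D + θ₂'X, and let S̃₁(X) be any square-integrable function of X. Let (γ₁₀, γ₁₁, γ₁₂) be the population least-squares coefficients of Y on (1, D, S̃₁(X)) within {A=1}. Then γ₁₁ = θ₁₂ + θ₂'[ ζ₁ − β₁ ρ √(Var(E[D|X,A=1]) / Var(S̃₁(X))) ] / ( Var(D|A=1) − Var(E[D|X,A=1]) ρ² ), where ρ = corr(E[D|X,A=1], S̃₁(X)), ζ₁ⱼ = cov(E[D|X,A=1], Xⱼ | A=1), and β₁ⱼ = cov(S̃₁(X), Xⱼ | A=1). -/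
open MeasureTheory ProbabilityTheory

/-- Population covariance of two real random variables under a measure. -/
noncomputable def covar {Ω : Type*} [MeasurableSpace Ω] (ν : Measure Ω) (f g : Ω → ℝ) : ℝ :=
  ∫ ω, f ω * g ω ∂ν - (∫ ω, f ω ∂ν) * (∫ ω, g ω ∂ν)

/-- Population correlation of two real random variables under a measure. -/
noncomputable def corr {Ω : Type*} [MeasurableSpace Ω] (ν : Measure Ω) (f g : Ω → ℝ) : ℝ :=
  covar ν f g / (Real.sqrt (covar ν f f) * Real.sqrt (covar ν g g))

lemma int_mul {Ω : Type*} [MeasurableSpace Ω] {ν : Measure Ω} [IsProbabilityMeasure ν]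
    {f g : Ω → ℝ} (hf : MemLp f 2 ν) (hg : MemLp g 2 ν) :
    Integrable (fun ω => f ω * g ω) ν := by
  have h : MemLp (f • g) 1 ν := hg.smul hf (hpqr := ⟨by
    rw [inv_one]
    exact ENNReal.inv_two_add_inv_two⟩)
  rw [memLp_one_iff_integrable] at h
  exact h

lemma tower_mul {Ω : Type*} {m : MeasurableSpace Ω} [m0 : MeasurableSpace Ω]
    {ν : Measure Ω} [IsProbabilityMeasure ν] (hm : m ≤ m0) {f h w : Ω → ℝ}
    (hver : ν[f | m] =ᵐ[ν] w)
    (hh : StronglyMeasurable[m] h) (hh2 : MemLp h 2 ν) (hf2 : MemLp f 2 ν) :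
    ∫ ω, h ω * f ω ∂ν = ∫ ω, h ω * w ω ∂ν := by
  have hfint : Integrable f ν := hf2.integrable one_le_two
  have hmul : Integrable (fun ω => h ω * f ω) ν := int_mul hh2 hf2
  have h1 : ν[(fun ω => h ω * f ω)|m] =ᵐ[ν] fun ω => h ω * (ν[f|m]) ω :=
    condExp_mul_of_stronglyMeasurable_left hh hmul hfint
  calc ∫ ω, h ω * f ω ∂ν = ∫ ω, (ν[(fun ω => h ω * f ω)|m]) ω ∂ν :=
        (integral_condExp hm).symm
    _ = ∫ ω, h ω * (ν[f|m]) ω ∂ν := integral_congr_ae h1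
    _ = ∫ ω, h ω * w ω ∂ν :=
        integral_congr_ae (hver.mono fun ω hω => by dsimp only; rw [hω])

lemma expand4 {Ω : Type*} [MeasurableSpace Ω] {ν : Measure Ω} [IsProbabilityMeasure ν]
    {h f1 f2 f3 : Ω → ℝ} (a b c : ℝ) (hh : MemLp h 2 ν)
    (h1 : MemLp f1 2 ν) (h2 : MemLp f2 2 ν) (h3 : MemLp f3 2 ν) :
    ∫ ω, h ω * (f1 ω - a - b * f2 ω - c * f3 ω) ∂ν
      = ∫ ω, h ω * f1 ω ∂ν - a * ∫ ω, h ω ∂ν - b * ∫ ω, h ω * f2 ω ∂ν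
        - c * ∫ ω, h ω * f3 ω ∂ν := by
  have ih : Integrable h ν := hh.integrable one_le_two
  have i1 := int_mul hh h1
  have i2 := int_mul hh h2
  have i3 := int_mul hh h3
  have I1 : Integrable (fun ω => h ω * f1 ω - a * h ω) ν := by
    exact i1.sub (ih.const_mul a)
  have I12 : Integrable (fun ω => h ω * f1 ω - a * h ω - b * (h ω * f2 ω)) ν := by
    exact I1.sub (i2.const_mul b)
  have e : (fun ω => h ω * (f1 ω - a - b * f2 ω - c * f3 ω))
      = fun ω => h ω * f1 ω - a * h ω - b * (h ω * f2 ω) - c * (h ω * f3 ω) := by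
    funext ω; ring
  rw [e, integral_sub I12 (i3.const_mul c), integral_sub I1 (i2.const_mul b),
    integral_sub i1 (ih.const_mul a), integral_const_mul, integral_const_mul,
    integral_const_mul]

lemma expand_model {Ω : Type*} [MeasurableSpace Ω] {ν : Measure Ω} [IsProbabilityMeasure ν]
    {k : ℕ} {h f2 : Ω → ℝ} {X : Ω → Fin k → ℝ} (a b : ℝ) (θ : Fin k → ℝ)
    (hh : MemLp h 2 ν) (h2 : MemLp f2 2 ν) (hX : ∀ j, MemLp (fun ω => X ω j) 2 ν) :
    ∫ ω, h ω * (a + b * f2 ω + ∑ j, θ j * X ω j) ∂ν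
      = a * ∫ ω, h ω ∂ν + b * ∫ ω, h ω * f2 ω ∂ν
        + ∑ j, θ j * ∫ ω, h ω * X ω j ∂ν := by
  have ih : Integrable h ν := hh.integrable one_le_two
  have i2 := int_mul hh h2
  have iX : ∀ j : Fin k, Integrable (fun ω => θ j * (h ω * X ω j)) ν :=
    fun j => (int_mul hh (hX j)).const_mul _
  have I12 : Integrable (fun ω => a * h ω + b * (h ω * f2 ω)) ν := by
    exact (ih.const_mul a).add (i2.const_mul b)
  have e : (fun ω => h ω * (a + b * f2 ω + ∑ j, θ j * X ω j))
      = fun ω => (a * h ω + b * (h ω * f2 ω)) + ∑ j, θ j * (h ω * X ω j) := by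
    funext ω
    rw [show h ω * (a + b * f2 ω + ∑ j, θ j * X ω j)
        = a * h ω + b * (h ω * f2 ω) + h ω * ∑ j, θ j * X ω j from by ring,
      Finset.mul_sum]
    exact congrArg _ (Finset.sum_congr rfl fun j _ => by ring)
  rw [e, integral_add I12 (integrable_finset_sum (f := fun j ω => θ j * (h ω * X ω j)) _
      fun j _ => iX j),
    integral_add (ih.const_mul a) (i2.const_mul b), integral_const_mul, integral_const_mul,
    integral_finset_sum (f := fun j ω => θ j * (h ω * X ω j)) _ fun j _ => iX j]
  exact congrArg _ (Finset.sum_congr rfl fun j _ => integral_const_mul _ _)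

lemma rho_mul_sq {c Vg VS : ℝ} (hg : 0 < Vg) (hs : 0 < VS) :
    c / (Real.sqrt Vg * Real.sqrt VS) * Real.sqrt (Vg / VS) = c / VS := by
  have h1 : Real.sqrt Vg ≠ 0 := ne_of_gt (Real.sqrt_pos.mpr hg)
  have h2 : Real.sqrt VS ≠ 0 := ne_of_gt (Real.sqrt_pos.mpr hs)
  rw [Real.sqrt_div hg.le]
  field_simp
  linear_combination (-c) * (Real.sq_sqrt hs.le)

lemma rho_sq {c Vg VS : ℝ} (hg : 0 < Vg) (hs : 0 < VS) :
    Vg * (c / (Real.sqrt Vg * Real.sqrt VS)) ^ 2 = c ^ 2 / VS := by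
  rw [div_pow, mul_pow, Real.sq_sqrt hg.le, Real.sq_sqrt hs.le]
  field_simp

lemma sub_div_eq {VD c VS : ℝ} (h : VS ≠ 0) : VD - c ^ 2 / VS = (VD * VS - c ^ 2) / VS := by
  field_simp

lemma frac_swap {Z W c VD VS : ℝ} (hVS : VS ≠ 0) (h1 : VD - c ^ 2 / VS ≠ 0)
    (h2 : VD * VS - c ^ 2 ≠ 0) :
    (Z - W * (c / VS)) / (VD - c ^ 2 / VS) = (Z * VS - c * W) / (VD * VS - c ^ 2) := by
  rw [div_eq_div_iff h1 h2]
  field_simp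
  try ring
  try exact Or.inl trivial

/-- Stage-I misspecification bias formula: conditionally on `A = 1`, the
outcome follows the linear model `E[Y | D, X, A=1] = θ₀* + θ₁₂ D + θ₂'X`, and
`(γ₁₀, γ₁₁, γ₁₂)` are the population least-squares coefficients of `Y` on
`(1, D, S̃₁(X))` within `{A = 1}`.  Then
`γ₁₁ = θ₁₂ + θ₂'[ζ₁ - β₁ ρ √(Var(E[D|X,A=1])/Var(S̃₁(X)))] /
  (Var(D|A=1) - Var(E[D|X,A=1]) ρ²)`,
with `ρ = corr(E[D|X,A=1], S̃₁(X))`, `ζ₁ⱼ = cov(E[D|X,A=1], Xⱼ | A=1)` and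
`β₁ⱼ = cov(S̃₁(X), Xⱼ | A=1)`. -/
theorem stmt9
    {Ω : Type*} [MeasurableSpace Ω] (μ : Measure Ω) [IsProbabilityMeasure μ]
    {k : ℕ} (Y A D : Ω → ℝ) (X : Ω → Fin k → ℝ)
    (hA : Measurable A) (hD : Measurable D) (hX : Measurable X) (hY : Measurable Y)
    (s : Set Ω) (hs : s = {ω | A ω = 1}) (hμs : μ s ≠ 0)
    (θ₀s θ₁₂ : ℝ) (θ₂ : Fin k → ℝ)
    -- linear outcome model conditionally on A = 1
    (hmodel : (μ[|s])[Y | MeasurableSpace.comap (fun ω => (D ω, X ω)) inferInstance]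
      =ᵐ[μ[|s]] fun ω => θ₀s + θ₁₂ * D ω + ∑ j, θ₂ j * X ω j)
    -- g(X) is a version of E[D | X, A = 1]
    (g : (Fin k → ℝ) → ℝ) (hg : Measurable g)
    (hgver : (μ[|s])[D | MeasurableSpace.comap X inferInstance]
      =ᵐ[μ[|s]] fun ω => g (X ω))
    (S₁ : (Fin k → ℝ) → ℝ) (hS₁ : Measurable S₁)
    -- square integrability of all relevant variables, conditionally on A = 1
    (hY2 : MemLp Y 2 (μ[|s])) (hD2 : MemLp D 2 (μ[|s]))
    (hg2 : MemLp (fun ω => g (X ω)) 2 (μ[|s]))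
    (hS2 : MemLp (fun ω => S₁ (X ω)) 2 (μ[|s]))
    (hX2 : ∀ j, MemLp (fun ω => X ω j) 2 (μ[|s]))
    -- population normal equations for least squares of Y on (1, D, S̃₁(X)) given A = 1
    (γ₁₀ γ₁₁ γ₁₂ : ℝ)
    (hne1 : ∫ ω, (Y ω - γ₁₀ - γ₁₁ * D ω - γ₁₂ * S₁ (X ω)) ∂(μ[|s]) = 0)
    (hne2 : ∫ ω, D ω * (Y ω - γ₁₀ - γ₁₁ * D ω - γ₁₂ * S₁ (X ω)) ∂(μ[|s]) = 0)
    (hne3 : ∫ ω, S₁ (X ω) * (Y ω - γ₁₀ - γ₁₁ * D ω - γ₁₂ * S₁ (X ω)) ∂(μ[|s]) = 0)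
    -- nondegeneracy
    (hVS : 0 < covar (μ[|s]) (fun ω => S₁ (X ω)) (fun ω => S₁ (X ω)))
    (hVg : 0 < covar (μ[|s]) (fun ω => g (X ω)) (fun ω => g (X ω)))
    (hden : covar (μ[|s]) D D
        - covar (μ[|s]) (fun ω => g (X ω)) (fun ω => g (X ω))
          * (corr (μ[|s]) (fun ω => g (X ω)) (fun ω => S₁ (X ω))) ^ 2 ≠ 0) :
    γ₁₁ = θ₁₂ +
      (∑ j, θ₂ j *
        (covar (μ[|s]) (fun ω => g (X ω)) (fun ω => X ω j)
          - covar (μ[|s]) (fun ω => S₁ (X ω)) (fun ω => X ω j)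
            * corr (μ[|s]) (fun ω => g (X ω)) (fun ω => S₁ (X ω))
            * Real.sqrt (covar (μ[|s]) (fun ω => g (X ω)) (fun ω => g (X ω))
                / covar (μ[|s]) (fun ω => S₁ (X ω)) (fun ω => S₁ (X ω)))))
      / (covar (μ[|s]) D D
          - covar (μ[|s]) (fun ω => g (X ω)) (fun ω => g (X ω))
            * (corr (μ[|s]) (fun ω => g (X ω)) (fun ω => S₁ (X ω))) ^ 2) := by
  haveI hprob : IsProbabilityMeasure (μ[|s]) := cond_isProbabilityMeasure hμs
  set ν := μ[|s] with hνdef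
  have hDX : Measurable (fun ω => (D ω, X ω)) := hD.prodMk hX
  have hm₁ := hDX.comap_le
  have hm₂ := hX.comap_le
  have hbase : Measurable[MeasurableSpace.comap (fun ω => (D ω, X ω)) inferInstance]
      (fun ω => (D ω, X ω)) := Measurable.of_comap_le le_rfl
  have hXbase : Measurable[MeasurableSpace.comap X inferInstance] X :=
    Measurable.of_comap_le le_rfl
  have hD1 : StronglyMeasurable[MeasurableSpace.comap (fun ω => (D ω, X ω)) inferInstance] D :=
    (measurable_fst.comp hbase).stronglyMeasurable
  have hS1m : StronglyMeasurable[MeasurableSpace.comap (fun ω => (D ω, X ω)) inferInstance]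
      (fun ω => S₁ (X ω)) := ((hS₁.comp measurable_snd).comp hbase).stronglyMeasurable
  have hS2m : StronglyMeasurable[MeasurableSpace.comap X inferInstance]
      (fun ω => S₁ (X ω)) := (hS₁.comp hXbase).stronglyMeasurable
  have hXj2m : ∀ j, StronglyMeasurable[MeasurableSpace.comap X inferInstance]
      (fun ω => X ω j) := fun j => ((measurable_pi_apply j).comp hXbase).stronglyMeasurable
  -- model equations
  have E1 := (tower_mul (h := fun _ => (1:ℝ)) hm₁ hmodel stronglyMeasurable_const
      (memLp_const 1) hY2).trans (expand_model θ₀s θ₁₂ θ₂ (memLp_const 1) hD2 hX2)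
  have E2 := (tower_mul (h := D) hm₁ hmodel hD1 hD2 hY2).trans
      (expand_model θ₀s θ₁₂ θ₂ hD2 hD2 hX2)
  have E3 := (tower_mul (h := fun ω => S₁ (X ω)) hm₁ hmodel hS1m hS2 hY2).trans
      (expand_model θ₀s θ₁₂ θ₂ hS2 hD2 hX2)
  -- g equations
  have F1 := tower_mul (h := fun _ => (1:ℝ)) hm₂ hgver stronglyMeasurable_const
      (memLp_const 1) hD2
  have F2 := tower_mul (h := fun ω => S₁ (X ω)) hm₂ hgver hS2m hS2 hD2
  have F3 : ∀ j, ∫ ω, X ω j * D ω ∂ν = ∫ ω, X ω j * g (X ω) ∂ν :=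
    fun j => tower_mul (h := fun ω => X ω j) hm₂ hgver (hXj2m j) (hX2 j) hD2
  -- normal equations expanded
  have N1 := expand4 (h := fun _ => (1:ℝ)) γ₁₀ γ₁₁ γ₁₂ (memLp_const 1) hY2 hD2 hS2
  have N2 := expand4 (h := D) γ₁₀ γ₁₁ γ₁₂ hD2 hY2 hD2 hS2
  have N3 := expand4 (h := fun ω => S₁ (X ω)) γ₁₀ γ₁₁ γ₁₂ hS2 hY2 hD2 hS2
  simp only [one_mul, integral_const, measure_univ, ENNReal.toReal_one, probReal_univ, smul_eq_mul,
    mul_one] at E1 E2 E3 F1 F2 F3 N1 N2 N3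
  rw [hne1] at N1
  rw [hne2] at N2
  rw [hne3] at N3
  simp only [covar, corr] at hVS hVg hden ⊢
  -- commutation identities
  have hcomm : ∀ f h : Ω → ℝ, ∫ ω, f ω * h ω ∂ν = ∫ ω, h ω * f ω ∂ν := fun f h =>
    integral_congr_ae (Filter.Eventually.of_forall fun ω => mul_comm _ _)
  have hDS : ∫ ω, D ω * S₁ (X ω) ∂ν = ∫ ω, S₁ (X ω) * D ω ∂ν :=
    hcomm D (fun ω => S₁ (X ω))
  have hgS : ∫ ω, g (X ω) * S₁ (X ω) ∂ν = ∫ ω, S₁ (X ω) * g (X ω) ∂ν :=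
    hcomm (fun ω => g (X ω)) (fun ω => S₁ (X ω))
  have hR : (∑ j, θ₂ j * ∫ ω, D ω * X ω j ∂ν) = ∑ j, θ₂ j * ∫ ω, X ω j * g (X ω) ∂ν :=
    Finset.sum_congr rfl fun j _ => by rw [hcomm D (fun ω => X ω j), F3 j]
  have hPg : (∑ j, θ₂ j * ∫ ω, g (X ω) * X ω j ∂ν)
      = ∑ j, θ₂ j * ∫ ω, X ω j * g (X ω) ∂ν :=
    Finset.sum_congr rfl fun j _ => by rw [hcomm (fun ω => g (X ω)) (fun ω => X ω j)]
  -- abbreviations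
  set iD := ∫ ω, D ω ∂ν with hiD
  set iS := ∫ ω, S₁ (X ω) ∂ν with hiS
  set ig := ∫ ω, g (X ω) ∂ν with hig
  set iY := ∫ ω, Y ω ∂ν with hiY
  set iDD := ∫ ω, D ω * D ω ∂ν with hiDD
  set iSS := ∫ ω, S₁ (X ω) * S₁ (X ω) ∂ν with hiSS
  set igg := ∫ ω, g (X ω) * g (X ω) ∂ν with higg
  set iDY := ∫ ω, D ω * Y ω ∂ν with hiDY
  set iSY := ∫ ω, S₁ (X ω) * Y ω ∂ν with hiSY
  set iSD := ∫ ω, S₁ (X ω) * D ω ∂ν with hiSD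
  set iDS := ∫ ω, D ω * S₁ (X ω) ∂ν with hiDS
  set iSg := ∫ ω, S₁ (X ω) * g (X ω) ∂ν with hiSg
  set igS := ∫ ω, g (X ω) * S₁ (X ω) ∂ν with higS2
  set T := ∑ x, θ₂ x * ∫ ω, X ω x ∂ν with hT
  set Pg := ∑ x, θ₂ x * ∫ ω, g (X ω) * X ω x ∂ν with hPgdef
  set Q := ∑ x, θ₂ x * ∫ ω, S₁ (X ω) * X ω x ∂ν with hQ
  set VD := iDD - iD * iD with hVDdef
  set Vg := igg - ig * ig with hVgdef
  set VS := iSS - iS * iS with hVSdef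
  set c := igS - ig * iS with hcdef
  set ρ := c / (Real.sqrt Vg * Real.sqrt VS) with hρdef
  set sq := Real.sqrt (Vg / VS) with hsqdef
  have hVSne : VS ≠ 0 := ne_of_gt hVS
  have hsgpos : 0 < Real.sqrt Vg := Real.sqrt_pos.mpr hVg
  have hsspos : 0 < Real.sqrt VS := Real.sqrt_pos.mpr hVS
  have hsg2 : Real.sqrt Vg * Real.sqrt Vg = Vg := Real.mul_self_sqrt hVg.le
  have hss2 : Real.sqrt VS * Real.sqrt VS = VS := Real.mul_self_sqrt hVS.le
  have hrs : ρ * sq = c / VS := by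
    rw [hρdef, hsqdef]; exact rho_mul_sq hVg hVS
  have hρ2 : Vg * ρ ^ 2 = c ^ 2 / VS := by
    rw [hρdef]; exact rho_sq hVg hVS
  have hgoalsum : (∑ x, θ₂ x *
        (∫ ω, g (X ω) * X ω x ∂ν - ig * ∫ ω, X ω x ∂ν -
          (∫ ω, S₁ (X ω) * X ω x ∂ν - iS * ∫ ω, X ω x ∂ν) * ρ * sq))
      = (Pg - T * ig) - (Q - T * iS) * (ρ * sq) := by
    rw [Finset.sum_congr rfl (fun x (_ : x ∈ Finset.univ) =>
      show θ₂ x * (∫ ω, g (X ω) * X ω x ∂ν - ig * ∫ ω, X ω x ∂ν -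
          (∫ ω, S₁ (X ω) * X ω x ∂ν - iS * ∫ ω, X ω x ∂ν) * ρ * sq)
        = (θ₂ x * ∫ ω, g (X ω) * X ω x ∂ν - θ₂ x * (∫ ω, X ω x ∂ν) * ig)
          - (θ₂ x * ∫ ω, S₁ (X ω) * X ω x ∂ν - θ₂ x * (∫ ω, X ω x ∂ν) * iS) * (ρ * sq)
        from by ring)]
    simp only [Finset.sum_sub_distrib, ← Finset.sum_mul]
    rfl
  have A : γ₁₁ * VD + γ₁₂ * c = θ₁₂ * VD + (Pg - T * ig) := by
    rw [hVDdef, hcdef, hPgdef, hT]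
    linear_combination N2 - iD * N1 + E2 - iD * E1 + γ₁₂ * hgS - γ₁₂ * F2 - γ₁₂ * hDS
      + γ₁₂ * iS * F1 + hR - hPg - (∑ x, θ₂ x * ∫ ω, X ω x ∂ν) * F1
  have B : γ₁₁ * c + γ₁₂ * VS = θ₁₂ * c + (Q - T * iS) := by
    rw [hVSdef, hcdef, hQ, hT]
    linear_combination N3 - iS * N1 + E3 - iS * E1 + (γ₁₁ - θ₁₂) * hgS
      - (γ₁₁ - θ₁₂) * F2 + (γ₁₁ - θ₁₂) * iS * F1
  have hden' : VD - c ^ 2 / VS ≠ 0 := by rw [← hρ2]; exact hden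
  have hfrac : VD - c ^ 2 / VS = (VD * VS - c ^ 2) / VS := sub_div_eq hVSne
  have hne0 : VD * VS - c ^ 2 ≠ 0 := by
    intro h0
    exact hden' (by rw [hfrac, h0, zero_div])
  have key : γ₁₁ * (VD * VS - c ^ 2)
      = θ₁₂ * (VD * VS - c ^ 2) + (Pg - T * ig) * VS - c * (Q - T * iS) := by
    linear_combination VS * A - c * B
  have final : γ₁₁ - θ₁₂ = ((Pg - T * ig) * VS - c * (Q - T * iS)) / (VD * VS - c ^ 2) := by
    rw [eq_div_iff hne0]
    linear_combination key
  have goalfrac : ((Pg - T * ig) - (Q - T * iS) * (ρ * sq)) / (VD - Vg * ρ ^ 2)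
      = ((Pg - T * ig) * VS - c * (Q - T * iS)) / (VD * VS - c ^ 2) := by
    rw [hrs, hρ2]; exact frac_swap hVSne hden' hne0
  rw [hgoalsum, goalfrac]
  linarith [final]
end
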